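/- Fix d ∈ {1,2,3,7,11} and x ∈ ℚ(√(-d)). Elements R₁,…,R_n of ℚ(√(-d)) ∪ {∞} with R_n = x are the consecutive convergents of some continued fraction expansion of x with partial quotients in ℤ[ω_d] — i.e., there exist a₁,…,a_n ∈ ℤ[ω_d] such that R_k = (S_{a₁}⋯S_{a_k})(∞) for all k ∈ {1,…,n} — if and only if ∞ → R₁ → ⋯ → R_n is a walk in the Farey graph E_d. -/

import Mathlib

/-- `ω_d`: the generator of the ring of integers of `ℚ(√(-d))`. -/
noncomputable def omegaD (d : ℕ) : ℂ :=
  if d % 4 = 3 then (1 + Complex.I * Real.sqrt d) / 2 else Complex.I * Real.sqrt d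

/-- The ring of integers `ℤ[ω_d]` of `ℚ(√(-d))`, as a subset of `ℂ`. -/
def ringInt (d : ℕ) : Set ℂ := {z | ∃ a b : ℤ, z = (a : ℂ) + (b : ℂ) * omegaD d}

/-- `p` and `q` are coprime in `ℤ[ω_d]`. -/
def CoprimeIn (d : ℕ) (p q : ℂ) : Prop :=
  ∃ u v : ℂ, u ∈ ringInt d ∧ v ∈ ringInt d ∧ u * p + v * q = 1

/-- `x` is an element of the field `ℚ(√(-d)) ⊆ ℂ`. -/
def inK (d : ℕ) (x : ℂ) : Prop :=
  ∃ p q : ℂ, p ∈ ringInt d ∧ q ∈ ringInt d ∧ q ≠ 0 ∧ x = p / q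

/-- The point `p/q` of `ℂ ∪ {∞}`, with `p/0 = ∞`. -/
noncomputable def divC (p q : ℂ) : OnePoint ℂ :=
  if q = 0 then OnePoint.infty else ((p / q : ℂ) : OnePoint ℂ)

/-- Two points of `ℚ(√(-d)) ∪ {∞}` are Farey neighbours (joined by an edge of
the Farey graph `E_d`) if they have coprime representations `p₁/q₁`, `p₂/q₂`
with `|p₁q₂ − p₂q₁| = 1`. -/
def FareyAdj (d : ℕ) (x y : OnePoint ℂ) : Prop :=
  ∃ p₁ q₁ p₂ q₂ : ℂ, p₁ ∈ ringInt d ∧ q₁ ∈ ringInt d ∧ p₂ ∈ ringInt d ∧ q₂ ∈ ringInt d ∧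
    CoprimeIn d p₁ q₁ ∧ CoprimeIn d p₂ q₂ ∧ x = divC p₁ q₁ ∧ y = divC p₂ q₂ ∧
    ‖p₁ * q₂ - p₂ * q₁‖ = 1

/-- `f 0 → f 1 → ⋯ → f n` is a walk (of length `n`) in the Farey graph `E_d`. -/
def IsWalk (d n : ℕ) (f : ℕ → OnePoint ℂ) : Prop := ∀ k, k < n → FareyAdj d (f k) (f (k + 1))

/-- `f 0 → ⋯ → f n` is a geodesic path in `E_d`: a walk of minimal length
among all walks with the same endpoints. -/
def IsGeodesicWalk (d n : ℕ) (f : ℕ → OnePoint ℂ) : Prop :=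
  IsWalk d n f ∧ ∀ (m : ℕ) (g : ℕ → OnePoint ℂ), IsWalk d m g → g 0 = f 0 → g m = f n → n ≤ m

/-- Numerators of the convergents of `[a₁, a₂, …]` (`a 0` is unused):
`p₀ = 0`, `p₁ = 1`, `p_k = a_k p_{k−1} + p_{k−2}`. -/
noncomputable def cfP (a : ℕ → ℂ) : ℕ → ℂ
  | 0 => 0
  | 1 => 1
  | (k + 2) => a (k + 2) * cfP a (k + 1) + cfP a k

/-- Denominators of the convergents of `[a₁, a₂, …]`:
`q₀ = 1`, `q₁ = a₁`, `q_k = a_k q_{k−1} + q_{k−2}`. -/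
noncomputable def cfQ (a : ℕ → ℂ) : ℕ → ℂ
  | 0 => 1
  | 1 => a 1
  | (k + 2) => a (k + 2) * cfQ a (k + 1) + cfQ a k

/-- The walk `∞ → p₀/q₀ = 0 → p₁/q₁ → ⋯` along the convergents of `[a₁, a₂, …]`. -/
noncomputable def cfWalk (a : ℕ → ℂ) : ℕ → OnePoint ℂ :=
  fun k => if k = 0 then OnePoint.infty else divC (cfP a (k - 1)) (cfQ a (k - 1))

/-- The matrix of the Möbius transformation `S_a : z ↦ a + 1/z`. -/
noncomputable def Smat (a : ℂ) : Matrix (Fin 2) (Fin 2) ℂ := !![a, 1; 1, 0]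

/-- The product `S_{a₁} ⋯ S_{a_k}` of the matrices of the partial quotients. -/
noncomputable def Sprod (a : ℕ → ℂ) : ℕ → Matrix (Fin 2) (Fin 2) ℂ
  | 0 => 1
  | (k + 1) => Sprod a k * Smat (a (k + 1))


/-!
The convergents of `[a₁, …, a_k]` are read off the first column of `S_{a₁} ⋯ S_{a_k}`, whose
second column is the first column of the previous product. Since this matrix has determinant
`±1`, its columns are coprime and consecutive convergents are Farey neighbours.

Conversely, two coprime representations of a point differ by a factor of `ℤ[ω_d]`, and an element
of `ℤ[ω_d]` of absolute value one is a unit (its inverse is its conjugate). So a Farey neighbour of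
the point given by the first column `(p, q)` of a product `M` has a representation `(p', q')` with
`p q' - p' q = 1`, and then `M S_c` with `c = M₁₁ p' - M₀₁ q'` has first column `det M • (p', q')`.
Extending the partial quotients one step at a time in this way follows any walk from `∞`.
-/

lemma omegaD_mul_self (d : ℕ) : ∃ A B : ℤ, omegaD d * omegaD d = A + B * omegaD d := by
  have hsq : ((Real.sqrt d : ℝ) : ℂ) ^ 2 = d := by
    rw [← Complex.ofReal_pow, Real.sq_sqrt (Nat.cast_nonneg d), Complex.ofReal_natCast]
  unfold omegaD
  split_ifs with h
  · obtain ⟨m, hm⟩ : 4 ∣ d + 1 := by omega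
    have hm' : (d : ℂ) + 1 = 4 * m := by exact_mod_cast hm
    refine ⟨-m, 1, ?_⟩
    push_cast
    linear_combination (1 / 4 : ℂ) * ((Real.sqrt d : ℂ) ^ 2 * Complex.I_sq - hsq) - hm' / 4
  · exact ⟨-d, 0, by push_cast; linear_combination (Real.sqrt d : ℂ) ^ 2 * Complex.I_sq - hsq⟩

def ringIntSubring (d : ℕ) : Subring ℂ where
  carrier := ringInt d
  one_mem' := ⟨1, 0, by simp⟩
  zero_mem' := ⟨0, 0, by simp⟩
  add_mem' := by
    rintro _ _ ⟨a, b, rfl⟩ ⟨c, e, rfl⟩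
    exact ⟨a + c, b + e, by push_cast; ring⟩
  neg_mem' := by
    rintro _ ⟨a, b, rfl⟩
    exact ⟨-a, -b, by push_cast; ring⟩
  mul_mem' := by
    rintro _ _ ⟨a, b, rfl⟩ ⟨c, e, rfl⟩
    obtain ⟨A, B, hAB⟩ := omegaD_mul_self d
    exact ⟨a * c + b * e * A, a * e + b * c + b * e * B, by
      push_cast; linear_combination (b : ℂ) * e * hAB⟩

local notation "𝒪" => ringIntSubring

lemma conj_mem_ringInt {d : ℕ} {z : ℂ} (hz : z ∈ ringInt d) :
    starRingEnd ℂ z ∈ ringInt d := by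
  obtain ⟨a, b, rfl⟩ := hz
  have hω : starRingEnd ℂ (omegaD d) ∈ ringInt d := by
    by_cases h : d % 4 = 3
    · refine ⟨1, -1, ?_⟩
      rw [omegaD, if_pos h]
      simp only [map_div₀, map_add, map_one, map_mul, Complex.conj_I, Complex.conj_ofReal, neg_mul,
        map_ofNat, Int.cast_one, Int.cast_neg, one_mul]
      ring
    · refine ⟨0, -1, ?_⟩
      rw [omegaD, if_neg h]
      simp [Complex.conj_ofReal]
  simp only [map_add, map_mul, map_intCast]
  exact (𝒪 d).add_mem (intCast_mem (𝒪 d) a)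
    ((𝒪 d).mul_mem (intCast_mem (𝒪 d) b) hω)

lemma exists_mul_eq_one_of_norm_eq_one {d : ℕ} {w : ℂ} (hw : w ∈ ringInt d) (h : ‖w‖ = 1) :
    ∃ w' ∈ ringInt d, w * w' = 1 :=
  ⟨starRingEnd ℂ w, conj_mem_ringInt hw, by
    rw [Complex.mul_conj, Complex.normSq_eq_norm_sq, h]; norm_num⟩

lemma divC_mul_left {c : ℂ} (hc : c ≠ 0) (p q : ℂ) : divC (c * p) (c * q) = divC p q := by
  unfold divC
  by_cases hq : q = 0
  · simp [hq]
  · rw [if_neg hq, if_neg (mul_ne_zero hc hq), mul_div_mul_left _ _ hc]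

lemma mul_eq_mul_of_divC_eq {p₁ q₁ p₂ q₂ : ℂ} (h : divC p₁ q₁ = divC p₂ q₂) :
    p₁ * q₂ = p₂ * q₁ := by
  unfold divC at h
  split_ifs at h with h₁ h₂ h₂
  · simp [h₁, h₂]
  · exact absurd h (OnePoint.infty_ne_coe _)
  · exact absurd h (OnePoint.coe_ne_infty _)
  · rwa [OnePoint.coe_eq_coe, div_eq_div_iff h₁ h₂] at h

lemma CoprimeIn.exists_eq_mul_of_divC_eq {d : ℕ} {p₁ q₁ p₂ q₂ : ℂ} (hc : CoprimeIn d p₁ q₁)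
    (hp₂ : p₂ ∈ ringInt d) (hq₂ : q₂ ∈ ringInt d) (h : divC p₁ q₁ = divC p₂ q₂) :
    ∃ ε ∈ ringInt d, p₂ = ε * p₁ ∧ q₂ = ε * q₁ := by
  obtain ⟨u, v, hu, hv, huv⟩ := hc
  have hcross := mul_eq_mul_of_divC_eq h
  refine ⟨u * p₂ + v * q₂, (𝒪 d).add_mem ((𝒪 d).mul_mem hu hp₂) ((𝒪 d).mul_mem hv hq₂), ?_, ?_⟩
  · linear_combination (-p₂) * huv - v * hcross
  · linear_combination (-q₂) * huv + u * hcross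

lemma CoprimeIn.exists_det_eq_one_of_fareyAdj {d : ℕ} {p q : ℂ} {y : OnePoint ℂ}
    (hc : CoprimeIn d p q) (h : FareyAdj d (divC p q) y) :
    ∃ p' q', p' ∈ ringInt d ∧ q' ∈ ringInt d ∧ y = divC p' q' ∧ p * q' - p' * q = 1 := by
  obtain ⟨p₁, q₁, p₂, q₂, hp₁, hq₁, hp₂, hq₂, -, -, hx, rfl, hnorm⟩ := h
  obtain ⟨ε, hε, rfl, rfl⟩ := hc.exists_eq_mul_of_divC_eq hp₁ hq₁ hx
  have hw : ε * p * q₂ - p₂ * (ε * q) ∈ ringInt d :=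
    (𝒪 d).sub_mem ((𝒪 d).mul_mem hp₁ hq₂) ((𝒪 d).mul_mem hp₂ hq₁)
  obtain ⟨w', hw', hww'⟩ := exists_mul_eq_one_of_norm_eq_one hw hnorm
  have hdet : p * (ε * w' * q₂) - ε * w' * p₂ * q = 1 := by linear_combination hww'
  have hu : ε * w' ≠ 0 := right_ne_zero_of_mul_eq_one (a := p * q₂ - p₂ * q) (by
    linear_combination hww')
  have hεw' := (𝒪 d).mul_mem hε hw'
  exact ⟨_, _, (𝒪 d).mul_mem hεw' hp₂, (𝒪 d).mul_mem hεw' hq₂,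
    (divC_mul_left hu _ _).symm, hdet⟩

/-- The partial quotient `c` that moves the first column of `M` to a given neighbour. -/
lemma mul_Smat_col_zero (M : Matrix (Fin 2) (Fin 2) ℂ) {p q : ℂ}
    (h : M 0 0 * q - p * M 1 0 = 1) :
    (M * Smat (M 1 1 * p - M 0 1 * q)) 0 0 = M.det * p ∧
      (M * Smat (M 1 1 * p - M 0 1 * q)) 1 0 = M.det * q := by
  simp only [Smat, Matrix.det_fin_two, Matrix.mul_apply, Fin.sum_univ_two, Matrix.of_apply,
    Matrix.cons_val', Matrix.cons_val_zero, Matrix.cons_val_one, Matrix.empty_val',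
    Matrix.cons_val_fin_one]
  constructor
  · linear_combination (-M 0 1) * h
  · linear_combination (-M 1 1) * h

lemma coprimeIn_of_det_mul_eq_one {d : ℕ} {M : Matrix (Fin 2) (Fin 2) ℂ}
    (hM : ∀ i j, M i j ∈ ringInt d) {u : ℂ} (hu : u ∈ ringInt d) (hdet : M.det * u = 1) :
    CoprimeIn d (M 0 0) (M 1 0) := by
  refine ⟨u * M 1 1, -(u * M 0 1), (𝒪 d).mul_mem hu (hM 1 1),
    (𝒪 d).neg_mem ((𝒪 d).mul_mem hu (hM 0 1)), ?_⟩
  rw [Matrix.det_fin_two] at hdet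
  linear_combination hdet

lemma exists_Smat_of_fareyAdj {d : ℕ} {M : Matrix (Fin 2) (Fin 2) ℂ}
    (hM : ∀ i j, M i j ∈ ringInt d) (hdet : M.det ≠ 0) (hc : CoprimeIn d (M 0 0) (M 1 0))
    {y : OnePoint ℂ} (h : FareyAdj d (divC (M 0 0) (M 1 0)) y) :
    ∃ c ∈ ringInt d, divC ((M * Smat c) 0 0) ((M * Smat c) 1 0) = y := by
  obtain ⟨p, q, hp, hq, rfl, hpq⟩ := hc.exists_det_eq_one_of_fareyAdj h
  obtain ⟨h0, h1⟩ := mul_Smat_col_zero M hpq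
  exact ⟨_, (𝒪 d).sub_mem ((𝒪 d).mul_mem (hM 1 1) hp) ((𝒪 d).mul_mem (hM 0 1) hq),
    by rw [h0, h1, divC_mul_left hdet]⟩

/-- The point `(S_{a₁} ⋯ S_{a_k})(∞)`. -/
noncomputable def convergent (a : ℕ → ℂ) (k : ℕ) : OnePoint ℂ :=
  divC (Sprod a k 0 0) (Sprod a k 1 0)

lemma convergent_zero (a : ℕ → ℂ) : convergent a 0 = OnePoint.infty := by
  simp [convergent, divC, Sprod]

lemma Sprod_congr {a b : ℕ → ℂ} {k : ℕ} (h : ∀ j, 1 ≤ j → j ≤ k → a j = b j) :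
    Sprod a k = Sprod b k := by
  induction k with
  | zero => rfl
  | succ m ih =>
    rw [Sprod, Sprod, ih fun j h1 h2 => h j h1 (by omega), h (m + 1) (by omega) le_rfl]

lemma Sprod_det (a : ℕ → ℂ) (k : ℕ) : (Sprod a k).det = (-1) ^ k := by
  induction k with
  | zero => simp [Sprod]
  | succ m ih => rw [Sprod, Matrix.det_mul, ih, Smat, Matrix.det_fin_two_of, pow_succ]; ring

lemma Sprod_succ_apply_one (a : ℕ → ℂ) (k : ℕ) (i : Fin 2) :
    Sprod a (k + 1) i 1 = Sprod a k i 0 := by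
  simp [Sprod, Smat, Matrix.mul_apply, Fin.sum_univ_two]

lemma Sprod_mem {d : ℕ} {a : ℕ → ℂ} {k : ℕ} (ha : ∀ j, 1 ≤ j → j ≤ k → a j ∈ ringInt d)
    (i j : Fin 2) : Sprod a k i j ∈ ringInt d := by
  induction k generalizing i j with
  | zero =>
    rw [Sprod, Matrix.one_apply]
    split_ifs
    exacts [(𝒪 d).one_mem, (𝒪 d).zero_mem]
  | succ m ih =>
    have hS : ∀ i j, Smat (a (m + 1)) i j ∈ ringInt d := by
      intro i j
      fin_cases i <;> fin_cases j
      exacts [ha (m + 1) (by omega) le_rfl, (𝒪 d).one_mem,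
        (𝒪 d).one_mem, (𝒪 d).zero_mem]
    have ih' := ih fun j h1 h2 => ha j h1 (by omega)
    rw [Sprod, Matrix.mul_apply, Fin.sum_univ_two]
    exact (𝒪 d).add_mem ((𝒪 d).mul_mem (ih' i 0) (hS 0 j)) ((𝒪 d).mul_mem (ih' i 1) (hS 1 j))

lemma coprimeIn_Sprod {d : ℕ} {a : ℕ → ℂ} {k : ℕ} (ha : ∀ j, 1 ≤ j → j ≤ k → a j ∈ ringInt d) :
    CoprimeIn d (Sprod a k 0 0) (Sprod a k 1 0) :=
  coprimeIn_of_det_mul_eq_one (Sprod_mem ha) ((𝒪 d).pow_mem ((𝒪 d).neg_mem (𝒪 d).one_mem) k)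
    (by rw [Sprod_det, ← mul_pow]; norm_num)

lemma fareyAdj_convergent_succ {d : ℕ} {a : ℕ → ℂ} {k : ℕ}
    (ha : ∀ j, 1 ≤ j → j ≤ k + 1 → a j ∈ ringInt d) :
    FareyAdj d (convergent a k) (convergent a (k + 1)) := by
  have ha' : ∀ j, 1 ≤ j → j ≤ k → a j ∈ ringInt d := fun j h1 h2 => ha j h1 (by omega)
  refine ⟨_, _, _, _, Sprod_mem ha' 0 0, Sprod_mem ha' 1 0, Sprod_mem ha 0 0, Sprod_mem ha 1 0,
    coprimeIn_Sprod ha', coprimeIn_Sprod ha, rfl, rfl, ?_⟩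
  have hdet := Sprod_det a (k + 1)
  rw [Matrix.det_fin_two, Sprod_succ_apply_one, Sprod_succ_apply_one] at hdet
  rw [show Sprod a k 0 0 * Sprod a (k + 1) 1 0 - Sprod a (k + 1) 0 0 * Sprod a k 1 0
    = -(-1) ^ (k + 1) by linear_combination -hdet]
  simp

lemma exists_convergents_of_isWalk {d : ℕ} {W : ℕ → OnePoint ℂ} (h0 : W 0 = OnePoint.infty)
    {n : ℕ} (hW : IsWalk d n W) :
    ∃ a : ℕ → ℂ, (∀ k, 1 ≤ k → k ≤ n → a k ∈ ringInt d) ∧ ∀ k ≤ n, W k = convergent a k := by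
  induction n with
  | zero => exact ⟨0, by omega, fun k hk => by rw [Nat.le_zero.mp hk, h0, convergent_zero]⟩
  | succ n ih =>
    obtain ⟨a, ha, hWa⟩ := ih fun k hk => hW k (by omega)
    have hadj : FareyAdj d (convergent a n) (W (n + 1)) := hWa n le_rfl ▸ hW n (by omega)
    obtain ⟨c, hc, hcW⟩ := exists_Smat_of_fareyAdj (Sprod_mem ha) (by simp [Sprod_det])
      (coprimeIn_Sprod ha) hadj
    have hprefix : ∀ k ≤ n, Sprod (Function.update a (n + 1) c) k = Sprod a k :=
      fun k hk => Sprod_congr fun j _ hj => Function.update_of_ne (by omega) _ _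
    refine ⟨Function.update a (n + 1) c, fun k h1 h2 => ?_, fun k hk => ?_⟩
    · rcases Nat.lt_or_ge k (n + 1) with hk | hk
      · rw [Function.update_of_ne (by omega)]; exact ha k h1 (by omega)
      · rw [show k = n + 1 by omega, Function.update_self]; exact hc
    · rcases Nat.lt_or_ge k (n + 1) with hk' | hk'
      · rw [hWa k (by omega), convergent, convergent, hprefix k (by omega)]
      · rw [show k = n + 1 by omega, ← hcW, convergent, Sprod, hprefix n le_rfl,
          Function.update_self]

theorem convergents_iff_walk_general (d : ℕ) (n : ℕ) (R : ℕ → OnePoint ℂ) :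
    (∃ a : ℕ → ℂ, (∀ k, 1 ≤ k → k ≤ n → a k ∈ ringInt d) ∧
        ∀ k, 1 ≤ k → k ≤ n → R k = divC (Sprod a k 0 0) (Sprod a k 1 0)) ↔
      IsWalk d n (fun k => if k = 0 then OnePoint.infty else R k) := by
  set W : ℕ → OnePoint ℂ := fun k => if k = 0 then OnePoint.infty else R k
  have hW : ∀ a, (∀ k, 1 ≤ k → k ≤ n → R k = convergent a k) ↔
      ∀ k ≤ n, W k = convergent a k := by
    refine fun a => ⟨fun h k hk => ?_, fun h k h1 hk => ?_⟩
    · rcases k with _ | k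
      · exact (convergent_zero a).symm
      · exact h _ (by omega) hk
    · simpa [W, show k ≠ 0 by omega] using h k hk
  constructor
  · rintro ⟨a, ha, hR⟩ k hk
    rw [(hW a).1 hR k hk.le, (hW a).1 hR (k + 1) hk]
    exact fareyAdj_convergent_succ fun j h1 h2 => ha j h1 (h2.trans hk)
  · intro hwalk
    obtain ⟨a, ha, hWa⟩ := exists_convergents_of_isWalk rfl hwalk
    exact ⟨a, ha, (hW a).2 hWa⟩

/-- For `d ∈ {1,2,3,7,11}` and `x ∈ ℚ(√(-d))`, elements
`R₁, …, R_n` of `ℚ(√(-d)) ∪ {∞}` with `R_n = x` are the consecutive convergents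
of a continued fraction expansion of `x` with partial quotients in `ℤ[ω_d]`
(i.e. `R_k = (S_{a₁} ⋯ S_{a_k})(∞)`) if and only if `∞ → R₁ → ⋯ → R_n` is a
walk in the Farey graph `E_d`. -/
theorem convergents_iff_walk (d : ℕ) (hd : d ∈ ({1, 2, 3, 7, 11} : Set ℕ))
    (x : ℂ) (hx : inK d x) (n : ℕ) (hn : 1 ≤ n)
    (R : ℕ → OnePoint ℂ) (hR : R n = ((x : ℂ) : OnePoint ℂ)) :
    (∃ a : ℕ → ℂ, (∀ k, 1 ≤ k → k ≤ n → a k ∈ ringInt d) ∧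
        ∀ k, 1 ≤ k → k ≤ n → R k = divC (Sprod a k 0 0) (Sprod a k 1 0)) ↔
      IsWalk d n (fun k => if k = 0 then OnePoint.infty else R k) :=
  convergents_iff_walk_general d n R
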